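/- arXiv:1509.00051 — 3 statements merged into one kernel-verified Lean document; each statement's English description precedes it below -/
import Mathlib

section
/- Let X be a finite set of observations with |X| ≥ 3. Then the band distance D is a distance metric on X: for all x, y, z ∈ X, (i) D_{xy} ≥ 0; (ii) D_{xy} = 0 if and only if x = y; (iii) D_{xy} = D_{yx}; and (iv) D_{xz} ≤ D_{xy} + D_{yz}. -/
open Finset
open scoped Classical

/-- The set of times at which observation `x` lies within the band determined by the
unordered pair `s` of observations: times `t` with `b_ℓ(t) ≤ x t ≤ b_u(t)`. -/
noncomputable def timesInS {T : Type*} [Fintype T] (s : Sym2 (T → ℝ)) (x : T → ℝ) : Finset T :=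
  Finset.univ.filter (fun t =>
    Sym2.lift ⟨fun v w => min (v t) (w t), fun v w => min_comm (v t) (w t)⟩ s ≤ x t ∧
    x t ≤ Sym2.lift ⟨fun v w => max (v t) (w t), fun v w => max_comm (v t) (w t)⟩ s)

/-- The set of bands of a dataset `X`: one band for each unordered pair of distinct
observations in `X`. -/
noncomputable def bands {T : Type*} [Fintype T] (X : Finset (T → ℝ)) : Finset (Sym2 (T → ℝ)) :=
  X.sym2.filter (fun s => ¬ s.IsDiag)

/-- Bandwise (Jaccard) similarity of `x` and `y` with respect to the band `s`. -/
noncomputable def bandSimS {T : Type*} [Fintype T] (s : Sym2 (T → ℝ)) (x y : T → ℝ) : ℝ :=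
  if timesInS s x ∪ timesInS s y = ∅ then 1
  else ((timesInS s x ∩ timesInS s y).card : ℝ) / ((timesInS s x ∪ timesInS s y).card : ℝ)

/-- Bandwise (Jaccard) distance of `x` and `y` with respect to the band `s`. -/
noncomputable def bandDistS {T : Type*} [Fintype T] (s : Sym2 (T → ℝ)) (x y : T → ℝ) : ℝ :=
  1 - bandSimS s x y

/-- `B_{xy}`: the set of bands of `X` containing `x` or `y` at some time. -/
noncomputable def Bxy {T : Type*} [Fintype T] (X : Finset (T → ℝ)) (x y : T → ℝ) :
    Finset (Sym2 (T → ℝ)) :=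
  (bands X).filter (fun s => timesInS s x ∪ timesInS s y ≠ ∅)

/-- The band distance `D_{xy}`: the average bandwise distance over all bands in `B_{xy}`. -/
noncomputable def bandD {T : Type*} [Fintype T] (X : Finset (T → ℝ)) (x y : T → ℝ) : ℝ :=
  (1 / ((Bxy X x y).card : ℝ)) * ∑ s ∈ Bxy X x y, bandDistS s x y


/-!
`D` is an instance of a general construction: if `δ i` (`i ∈ S`, `S` finite) are `[0, 1]`-valued
pseudometrics such that `δ i x y = 1` when exactly one of `x, y` is present at `i` and
`δ i x y = 0` when neither is, then `∑ i ∈ S, δ i x y` divided by the number of indices at which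
`x` or `y` is present is again a pseudometric. For the triangle inequality through `y`, the `m`
indices at which only `y` is present add `m` to both denominators on the right and `2 m` to the
sum of their numerators, while `d / u ≤ (d + 2 m) / (u + m)` for `0 ≤ d ≤ u`. The Jaccard
distance is itself such an average (of the discrete distance `[t ∈ A ∆ B]` over times), and `D`
averages the Jaccard distances of the sets of times spent in each band.

Definiteness uses a third observation `w`: if `x` and `y` lie in the bands `{x, w}` and `{y, w}` at
the same times, then at every time each of them lies between the other and `w`, so they agree.
-/

theorem div_le_div_add_div_of_le_add {d u a ua b ub m : ℝ} (hd : 0 ≤ d) (hdu : d ≤ u)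
    (ha : 0 ≤ a) (haua : a ≤ ua) (hb : 0 ≤ b) (hbub : b ≤ ub) (hm : 0 ≤ m)
    (hua : ua ≤ u + m) (hub : ub ≤ u + m) (h : d + 2 * m ≤ a + b) :
    d / u ≤ a / ua + b / ub := by
  rcases (hd.trans hdu).eq_or_lt with hu | hu
  · rw [← hu, div_zero]
    exact add_nonneg (div_nonneg ha (ha.trans haua)) (div_nonneg hb (hb.trans hbub))
  have hum : 0 < u + m := by linarith
  have shrink : ∀ {c uc}, 0 ≤ c → c ≤ uc → uc ≤ u + m → c / (u + m) ≤ c / uc := by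
    intro c uc hc hcuc hucm
    rcases (hc.trans hcuc).eq_or_lt with huc | huc
    · rw [le_antisymm (huc ▸ hcuc) hc, zero_div, zero_div]
    · gcongr
  calc d / u ≤ (d + 2 * m) / (u + m) := by rw [div_le_div_iff₀ hu hum]; nlinarith
    _ ≤ (a + b) / (u + m) := by gcongr
    _ = a / (u + m) + b / (u + m) := add_div _ _ _
    _ ≤ a / ua + b / ub := add_le_add (shrink ha haua hua) (shrink hb hbub hub)

section AverageDist

variable {ι α : Type*}

noncomputable def averageDist (S : Finset ι) (P : ι → α → Prop) (δ : ι → α → α → ℝ)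
    (x y : α) : ℝ :=
  (∑ i ∈ S, δ i x y) / #{i ∈ S | P i x ∨ P i y}

variable {S : Finset ι} {P : ι → α → Prop} {δ : ι → α → α → ℝ}

theorem averageDist_nonneg (hnonneg : ∀ i x y, 0 ≤ δ i x y) (x y : α) :
    0 ≤ averageDist S P δ x y :=
  div_nonneg (sum_nonneg fun i _ => hnonneg i x y) (Nat.cast_nonneg _)

theorem averageDist_comm (hcomm : ∀ i x y, δ i x y = δ i y x) (x y : α) :
    averageDist S P δ x y = averageDist S P δ y x := by
  simp only [averageDist, hcomm _ x y, or_comm]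

theorem averageDist_eq_zero_iff (hnonneg : ∀ i x y, 0 ≤ δ i x y)
    (habsent : ∀ i x y, ¬P i x → ¬P i y → δ i x y = 0) (x y : α) :
    averageDist S P δ x y = 0 ↔ ∀ i ∈ S, δ i x y = 0 := by
  rw [averageDist, div_eq_zero_iff, Nat.cast_eq_zero, card_eq_zero, filter_eq_empty_iff,
    sum_eq_zero_iff_of_nonneg fun i _ => hnonneg i x y]
  refine or_iff_left_of_imp fun h i hi => ?_
  obtain ⟨hx, hy⟩ := not_or.1 (h hi)
  exact habsent i x y hx hy

theorem sum_le_card_filter_present (hle : ∀ i x y, δ i x y ≤ 1)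
    (habsent : ∀ i x y, ¬P i x → ¬P i y → δ i x y = 0) (x y : α) :
    ∑ i ∈ S, δ i x y ≤ #{i ∈ S | P i x ∨ P i y} := by
  rw [← sum_filter_of_ne (p := fun i => P i x ∨ P i y) fun i _ hi => ?_]
  · calc ∑ i ∈ S with P i x ∨ P i y, δ i x y ≤ ∑ i ∈ S with P i x ∨ P i y, (1 : ℝ) :=
          sum_le_sum fun i _ => hle i x y
      _ = #{i ∈ S | P i x ∨ P i y} := by simp
  · by_contra h
    obtain ⟨hx, hy⟩ := not_or.1 h
    exact hi (habsent i x y hx hy)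

theorem averageDist_triangle (hnonneg : ∀ i x y, 0 ≤ δ i x y) (hle : ∀ i x y, δ i x y ≤ 1)
    (habsent : ∀ i x y, ¬P i x → ¬P i y → δ i x y = 0)
    (hxor : ∀ i x y, Xor (P i x) (P i y) → δ i x y = 1)
    (htri : ∀ i x y z, δ i x z ≤ δ i x y + δ i y z) (x y z : α) :
    averageDist S P δ x z ≤ averageDist S P δ x y + averageDist S P δ y z := by
  set M := {i ∈ S | P i y ∧ ¬P i x ∧ ¬P i z}
  have hsum : ∑ i ∈ S, δ i x z + 2 * #M ≤ ∑ i ∈ S, δ i x y + ∑ i ∈ S, δ i y z := by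
    rw [natCast_card_filter, mul_sum, ← sum_add_distrib, ← sum_add_distrib]
    refine sum_le_sum fun i _ => ?_
    split_ifs with h
    · rw [habsent i x z h.2.1 h.2.2, hxor i x y (Or.inr ⟨h.1, h.2.1⟩),
        hxor i y z (Or.inl ⟨h.1, h.2.2⟩)]
      norm_num
    · simpa using htri i x y z
  have hcard : ∀ v w, (∀ i, P i v ∨ P i w → P i x ∨ P i y ∨ P i z) →
      (#{i ∈ S | P i v ∨ P i w} : ℝ) ≤ #{i ∈ S | P i x ∨ P i z} + #M := by
    intro v w hvw
    refine mod_cast (card_le_card fun i hi => ?_).trans (card_union_le _ _)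
    simp only [M, mem_filter, mem_union] at hi ⊢
    have := hvw i hi.2
    tauto
  exact div_le_div_add_div_of_le_add (sum_nonneg fun i _ => hnonneg i x z)
    (sum_le_card_filter_present hle habsent x z) (sum_nonneg fun i _ => hnonneg i x y)
    (sum_le_card_filter_present hle habsent x y) (sum_nonneg fun i _ => hnonneg i y z)
    (sum_le_card_filter_present hle habsent y z) (Nat.cast_nonneg _)
    (hcard x y fun i h => by tauto) (hcard y z fun i h => by tauto) hsum

end AverageDist

section Jaccard

open scoped symmDiff

variable {α : Type*}

-- When `A ∪ B = ∅` this is `0 / 0 = 0`, matching the convention `s^b_{xy} = 1`.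
noncomputable def jaccardDist (A B : Finset α) : ℝ :=
  (#(A ∆ B) : ℝ) / #(A ∪ B)

variable {A B : Finset α}

theorem jaccardDist_nonneg (A B : Finset α) : 0 ≤ jaccardDist A B := by
  unfold jaccardDist
  positivity

theorem jaccardDist_le_one (A B : Finset α) : jaccardDist A B ≤ 1 :=
  div_le_one_of_le₀ (mod_cast card_le_card symmDiff_subset_union) (Nat.cast_nonneg _)

theorem jaccardDist_comm (A B : Finset α) : jaccardDist A B = jaccardDist B A := by
  rw [jaccardDist, jaccardDist, symmDiff_comm, union_comm]

theorem jaccardDist_eq_one_sub (h : (A ∪ B).Nonempty) :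
    jaccardDist A B = 1 - #(A ∩ B) / #(A ∪ B) := by
  have hcard : #(A ∆ B) + #(A ∩ B) = #(A ∪ B) := by
    rw [symmDiff_eq_sup_sdiff_inf]
    exact card_sdiff_add_card_eq_card inter_subset_union
  have hpos : (0 : ℝ) < #(A ∪ B) := mod_cast h.card_pos
  rw [jaccardDist, eq_sub_iff_add_eq, ← add_div, div_eq_one_iff_eq hpos.ne']
  exact_mod_cast hcard

theorem jaccardDist_eq_zero_iff : jaccardDist A B = 0 ↔ A = B := by
  rw [jaccardDist, div_eq_zero_iff, Nat.cast_eq_zero, Nat.cast_eq_zero, card_eq_zero,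
    card_eq_zero, union_eq_empty, ← bot_eq_empty, symmDiff_eq_bot]
  exact or_iff_left_of_imp fun h => h.1.trans h.2.symm

theorem jaccardDist_self (A : Finset α) : jaccardDist A A = 0 :=
  jaccardDist_eq_zero_iff.2 rfl

theorem jaccardDist_eq_zero_of_not_nonempty (hA : ¬A.Nonempty) (hB : ¬B.Nonempty) :
    jaccardDist A B = 0 := by
  rw [not_nonempty_iff_eq_empty.1 hA, not_nonempty_iff_eq_empty.1 hB, jaccardDist_self]

theorem jaccardDist_eq_one_of_xor (h : Xor A.Nonempty B.Nonempty) : jaccardDist A B = 1 := by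
  wlog hB : B.Nonempty generalizing A B
  · rw [jaccardDist_comm]
    exact this (xor_comm _ _ ▸ h) (h.resolve_right fun h' => hB h'.1).1
  have hA : A = ∅ := not_nonempty_iff_eq_empty.1 (h.resolve_left fun h' => h'.2 hB).2
  rw [jaccardDist, hA, ← bot_eq_empty, bot_symmDiff, bot_eq_empty, empty_union,
    div_self (mod_cast hB.card_pos.ne')]

theorem jaccardDist_eq_averageDist {S : Finset α} (hS : A ∪ B ⊆ S) :
    jaccardDist A B =
      averageDist S (fun t A => t ∈ A) (fun t A B => if t ∈ A ∆ B then 1 else 0) A B := by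
  rw [jaccardDist, averageDist, sum_boole]
  congr 3 <;> ext t <;> simp only [mem_filter, mem_union]
  · exact ⟨fun h => ⟨hS (symmDiff_subset_union h), h⟩, And.right⟩
  · exact ⟨fun h => ⟨hS (mem_union.2 h), h⟩, And.right⟩

theorem jaccardDist_triangle (A B C : Finset α) :
    jaccardDist A C ≤ jaccardDist A B + jaccardDist B C := by
  have hA : A ⊆ A ∪ B ∪ C := subset_union_left.trans subset_union_left
  have hB : B ⊆ A ∪ B ∪ C := subset_union_right.trans subset_union_left
  have hC : C ⊆ A ∪ B ∪ C := subset_union_right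
  rw [jaccardDist_eq_averageDist (union_subset hA hC),
    jaccardDist_eq_averageDist (union_subset hA hB), jaccardDist_eq_averageDist (union_subset hB hC)]
  apply averageDist_triangle
  · intro t U V
    split_ifs <;> norm_num
  · intro t U V
    split_ifs <;> norm_num
  · intro t U V hU hV
    simp [mem_symmDiff, hU, hV]
  · exact fun t U V h => if_pos (mem_symmDiff.2 h)
  · intro t U V W
    split_ifs with hUW hUV hVW <;> norm_num
    exact (mem_union.1 (symmDiff_triangle U V W hUW)).elim hUV ‹_›

end Jaccard

theorem exists_mem_ne_ne_of_three_le_card {α : Type*} {X : Finset α} (hX : 3 ≤ #X) (x y : α) :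
    ∃ w ∈ X, w ≠ x ∧ w ≠ y := by
  obtain ⟨w, hw, hwy⟩ := exists_mem_ne (s := X.erase x)
    (by have := pred_card_le_card_erase (a := x) (s := X); omega) y
  exact ⟨w, mem_of_mem_erase hw, ne_of_mem_erase hw, hwy⟩

section Band

variable {T : Type*} [Fintype T]

theorem bandDistS_eq_jaccardDist (s : Sym2 (T → ℝ)) (x y : T → ℝ) :
    bandDistS s x y = jaccardDist (timesInS s x) (timesInS s y) := by
  rw [bandDistS, bandSimS]
  split_ifs with h
  · rw [(union_eq_empty.1 h).1, (union_eq_empty.1 h).2, jaccardDist_self, sub_self]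
  · rw [jaccardDist_eq_one_sub (nonempty_iff_ne_empty.2 h)]

theorem mem_timesInS_mk {v w x : T → ℝ} {t : T} :
    t ∈ timesInS s(v, w) x ↔ x t ∈ Set.uIcc (v t) (w t) := by
  simp [timesInS, Set.uIcc]

theorem mk_mem_bands {X : Finset (T → ℝ)} {v w : T → ℝ} (hv : v ∈ X) (hw : w ∈ X)
    (hvw : v ≠ w) : s(v, w) ∈ bands X := by
  simp [bands, hv, hw, hvw]

theorem eq_of_timesInS_mk_eq {x y w : T → ℝ} (hx : timesInS s(x, w) x = timesInS s(x, w) y)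
    (hy : timesInS s(y, w) y = timesInS s(y, w) x) : x = y :=
  funext fun _ => Set.eq_of_mem_uIcc_of_mem_uIcc
    (mem_timesInS_mk.1 (hy ▸ mem_timesInS_mk.2 Set.left_mem_uIcc))
    (mem_timesInS_mk.1 (hx ▸ mem_timesInS_mk.2 Set.left_mem_uIcc))

theorem bandD_eq_averageDist (X : Finset (T → ℝ)) (x y : T → ℝ) :
    bandD X x y = averageDist (bands X) (fun s x => (timesInS s x).Nonempty)
      (fun s x y => jaccardDist (timesInS s x) (timesInS s y)) x y := by
  rw [bandD, averageDist, one_div_mul_eq_div, Bxy]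
  simp only [bandDistS_eq_jaccardDist]
  rw [sum_filter_of_ne fun s _ hs => ?_]
  · congr 3
    ext s
    simp only [mem_filter, ne_eq, ← not_nonempty_iff_eq_empty, not_not, union_nonempty]
  · rw [ne_eq, union_eq_empty]
    rintro ⟨hx, hy⟩
    exact hs (by rw [hx, hy, jaccardDist_self])

theorem bandD_nonneg (X : Finset (T → ℝ)) (x y : T → ℝ) : 0 ≤ bandD X x y := by
  rw [bandD_eq_averageDist]
  exact averageDist_nonneg (fun _ _ _ => jaccardDist_nonneg _ _) x y

theorem bandD_comm (X : Finset (T → ℝ)) (x y : T → ℝ) : bandD X x y = bandD X y x := by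
  rw [bandD_eq_averageDist, bandD_eq_averageDist]
  exact averageDist_comm (fun _ _ _ => jaccardDist_comm _ _) x y

theorem bandD_triangle (X : Finset (T → ℝ)) (x y z : T → ℝ) :
    bandD X x z ≤ bandD X x y + bandD X y z := by
  simp only [bandD_eq_averageDist]
  apply averageDist_triangle
  · exact fun _ _ _ => jaccardDist_nonneg _ _
  · exact fun _ _ _ => jaccardDist_le_one _ _
  · exact fun _ _ _ => jaccardDist_eq_zero_of_not_nonempty
  · exact fun _ _ _ => jaccardDist_eq_one_of_xor
  · exact fun _ _ _ _ => jaccardDist_triangle _ _ _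

theorem bandD_eq_zero_iff_timesInS_eq (X : Finset (T → ℝ)) (x y : T → ℝ) :
    bandD X x y = 0 ↔ ∀ s ∈ bands X, timesInS s x = timesInS s y := by
  rw [bandD_eq_averageDist, averageDist_eq_zero_iff]
  · simp only [jaccardDist_eq_zero_iff]
  · exact fun _ _ _ => jaccardDist_nonneg _ _
  · exact fun _ _ _ => jaccardDist_eq_zero_of_not_nonempty

theorem bandD_eq_zero_iff {X : Finset (T → ℝ)} (hX : 3 ≤ #X) {x y : T → ℝ} (hx : x ∈ X)
    (hy : y ∈ X) : bandD X x y = 0 ↔ x = y := by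
  rw [bandD_eq_zero_iff_timesInS_eq]
  refine ⟨fun h => ?_, fun h _ _ => h ▸ rfl⟩
  obtain ⟨w, hw, hwx, hwy⟩ := exists_mem_ne_ne_of_three_le_card hX x y
  exact eq_of_timesInS_mk_eq (h _ (mk_mem_bands hx hw hwx.symm))
    (h _ (mk_mem_bands hy hw hwy.symm)).symm

end Band

theorem band_distance_is_metric_general {T : Type*} [Fintype T]
    (X : Finset (T → ℝ)) (hX : 3 ≤ X.card)
    (x y z : T → ℝ) (hx : x ∈ X) (hy : y ∈ X) :
    0 ≤ bandD X x y ∧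
    (bandD X x y = 0 ↔ x = y) ∧
    bandD X x y = bandD X y x ∧
    bandD X x z ≤ bandD X x y + bandD X y z :=
  ⟨bandD_nonneg X x y, bandD_eq_zero_iff hX hx hy, bandD_comm X x y, bandD_triangle X x y z⟩

/-- The band distance `D` is a distance metric on a dataset `X` of at least three
observations: nonnegativity, identity of indiscernibles, symmetry, and the triangle
inequality. -/
theorem band_distance_is_metric {T : Type*} [Fintype T] [Nonempty T]
    (X : Finset (T → ℝ)) (hX : 3 ≤ X.card)
    (x y z : T → ℝ) (hx : x ∈ X) (hy : y ∈ X) (hz : z ∈ X) :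
    0 ≤ bandD X x y ∧
    (bandD X x y = 0 ↔ x = y) ∧
    bandD X x y = bandD X y x ∧
    bandD X x z ≤ bandD X x y + bandD X y z :=
  band_distance_is_metric_general X hX x y z hx hy
end

section
/- Let X be a finite set of observations with |X| ≥ 3, and let x, y ∈ X with x ≠ y (i.e., x(t) ≠ y(t) for some t ∈ T). Then the band distance D_{xy} > 0. More precisely, if t ∈ T satisfies (without loss of generality) x(t) > y(t) and z ∈ X is any observation distinct from x and y, then: if z(t) < x(t) the band determined by z and y contains y but not x at time t, and if z(t) ≥ x(t) the band determined by z and x contains x but not y at time t; in either case there is a band b ∈ B_{xy} with d^b_{xy} > 0. -/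
open Finset
open scoped Classical

lemma mem_timesInS_pair {T : Type*} [Fintype T] (v w x : T → ℝ) (t : T) :
    t ∈ timesInS s(v, w) x ↔ min (v t) (w t) ≤ x t ∧ x t ≤ max (v t) (w t) := by
  simp [timesInS]

lemma bandDistS_nonneg {T : Type*} [Fintype T] (s : Sym2 (T → ℝ)) (x y : T → ℝ) :
    0 ≤ bandDistS s x y := by
  unfold bandDistS bandSimS
  split
  · norm_num
  · rename_i h
    have hpos : (0:ℝ) < ((timesInS s x ∪ timesInS s y).card : ℝ) := by
      have := Finset.card_pos.mpr (Finset.nonempty_iff_ne_empty.mpr h)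
      exact_mod_cast this
    have hle : ((timesInS s x ∩ timesInS s y).card : ℝ) ≤ ((timesInS s x ∪ timesInS s y).card : ℝ) := by
      exact_mod_cast Finset.card_le_card (Finset.inter_subset_union)
    have : ((timesInS s x ∩ timesInS s y).card : ℝ) / ((timesInS s x ∪ timesInS s y).card : ℝ) ≤ 1 :=
      (div_le_one hpos).mpr hle
    linarith

lemma bandDistS_pos {T : Type*} [Fintype T] (s : Sym2 (T → ℝ)) (x y : T → ℝ) (t : T)
    (hmem : t ∈ timesInS s x ∪ timesInS s y) (hnot : t ∉ timesInS s x ∩ timesInS s y) :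
    0 < bandDistS s x y := by
  have hne : timesInS s x ∪ timesInS s y ≠ ∅ := by
    intro h; rw [h] at hmem; exact absurd hmem (Finset.notMem_empty t)
  unfold bandDistS bandSimS
  rw [if_neg hne]
  have hpos : (0:ℝ) < ((timesInS s x ∪ timesInS s y).card : ℝ) := by
    have := Finset.card_pos.mpr (Finset.nonempty_iff_ne_empty.mpr hne)
    exact_mod_cast this
  have hlt : ((timesInS s x ∩ timesInS s y).card : ℝ) < ((timesInS s x ∪ timesInS s y).card : ℝ) := by
    have : (timesInS s x ∩ timesInS s y) ⊂ (timesInS s x ∪ timesInS s y) :=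
      Finset.ssubset_iff_of_subset Finset.inter_subset_union |>.mpr ⟨t, hmem, hnot⟩
    exact_mod_cast Finset.card_lt_card this
  have : ((timesInS s x ∩ timesInS s y).card : ℝ) / ((timesInS s x ∪ timesInS s y).card : ℝ) < 1 :=
    (div_lt_one hpos).mpr hlt
  linarith

/-- If `x ≠ y` are observations in a dataset `X` with at least three observations, then
`D_{xy} > 0`.  More precisely, if `x t > y t` at some time `t` and `z ∈ X` is distinct
from `x` and `y`, then: if `z t < x t`, the band determined by `z` and `y` contains `y`
but not `x` at time `t`; if `z t ≥ x t`, the band determined by `z` and `x` contains `x`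
but not `y` at time `t`; and in either case there is a band `b ∈ B_{xy}` with
`d^b_{xy} > 0`. -/
theorem bandD_pos_of_ne {T : Type*} [Fintype T] [Nonempty T]
    (X : Finset (T → ℝ)) (hX : 3 ≤ X.card)
    (x y z : T → ℝ) (hx : x ∈ X) (hy : y ∈ X) (hz : z ∈ X)
    (hzx : z ≠ x) (hzy : z ≠ y)
    (t : T) (ht : x t > y t) :
    (z t < x t → t ∈ timesInS s(z, y) y ∧ t ∉ timesInS s(z, y) x) ∧
    (z t ≥ x t → t ∈ timesInS s(z, x) x ∧ t ∉ timesInS s(z, x) y) ∧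
    (∃ b ∈ Bxy X x y, 0 < bandDistS b x y) ∧
    0 < bandD X x y := by
  have hzy1 : z t < x t → t ∈ timesInS s(z, y) y ∧ t ∉ timesInS s(z, y) x := by
    intro h
    constructor
    · rw [mem_timesInS_pair]
      exact ⟨min_le_right _ _, le_max_right _ _⟩
    · rw [mem_timesInS_pair]
      push_neg
      intro _
      exact max_lt h ht
  have hzx1 : z t ≥ x t → t ∈ timesInS s(z, x) x ∧ t ∉ timesInS s(z, x) y := by
    intro h
    constructor
    · rw [mem_timesInS_pair]
      exact ⟨min_le_right _ _, le_max_right _ _⟩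
    · rw [mem_timesInS_pair]
      push_neg
      intro hc
      exfalso
      have : min (z t) (x t) ≤ y t := hc
      rcases min_le_iff.mp this with h1 | h1
      · linarith
      · linarith
  have hb : ∃ b ∈ Bxy X x y, 0 < bandDistS b x y := by
    by_cases h : z t < x t
    · refine ⟨s(z, y), ?_, ?_⟩
      · rw [Bxy, Finset.mem_filter]
        refine ⟨?_, ?_⟩
        · rw [bands, Finset.mem_filter]
          exact ⟨Finset.mk_mem_sym2_iff.mpr ⟨hz, hy⟩, by simp [Sym2.mk_isDiag_iff, hzy]⟩
        · intro he
          have := (hzy1 h).1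
          have : t ∈ timesInS s(z, y) x ∪ timesInS s(z, y) y := Finset.mem_union_right _ this
          rw [he] at this
          exact absurd this (Finset.notMem_empty t)
      · refine bandDistS_pos _ _ _ t (Finset.mem_union_right _ (hzy1 h).1) ?_
        intro hc
        exact (hzy1 h).2 (Finset.mem_inter.mp hc).1
    · push_neg at h
      refine ⟨s(z, x), ?_, ?_⟩
      · rw [Bxy, Finset.mem_filter]
        refine ⟨?_, ?_⟩
        · rw [bands, Finset.mem_filter]
          exact ⟨Finset.mk_mem_sym2_iff.mpr ⟨hz, hx⟩, by simp [Sym2.mk_isDiag_iff, hzx]⟩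
        · intro he
          have := (hzx1 h).1
          have : t ∈ timesInS s(z, x) x ∪ timesInS s(z, x) y := Finset.mem_union_left _ this
          rw [he] at this
          exact absurd this (Finset.notMem_empty t)
      · refine bandDistS_pos _ _ _ t (Finset.mem_union_left _ (hzx1 h).1) ?_
        intro hc
        exact (hzx1 h).2 (Finset.mem_inter.mp hc).2
  refine ⟨hzy1, hzx1, hb, ?_⟩
  obtain ⟨b, hbB, hbd⟩ := hb
  have hcard : (0:ℝ) < ((Bxy X x y).card : ℝ) := by
    have := Finset.card_pos.mpr ⟨b, hbB⟩
    exact_mod_cast this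
  have hsum : 0 < ∑ s ∈ Bxy X x y, bandDistS s x y :=
    Finset.sum_pos' (fun s _ => bandDistS_nonneg s x y) ⟨b, hbB, hbd⟩
  unfold bandD
  positivity
end

section
/- The band distance is invariant under time-wise order-preserving transformations: let X be a finite set of observations with |X| ≥ 2, and for each t ∈ T let φ_t : ℝ → ℝ be strictly increasing. Let X′ = {φ∘x : x ∈ X}, where (φ∘x)(t) = φ_t(x(t)). Then for all x, y ∈ X, the band distance between φ∘x and φ∘y computed in the dataset X′ equals the band distance D_{xy} computed in X. In particular, for every band b of X determined by v, w and the corresponding band b′ of X′ determined by φ∘v, φ∘w, one has T^{b′}(φ∘x) = T^b(x) for every x ∈ X. -/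
open Finset
open scoped Classical

/-!
A strictly increasing `φ t` commutes with `min` and `max` and reflects `≤`, so at each time `t`
the transformed observation lies between the transformed band bounds exactly when the original
one lies between the original bounds. Hence every band-membership set `T^b(x)` is unchanged.
The band distance only sees these sets, indexed by the bands, and the transformation is
injective, so it maps the bands of `X` (and the sets `B_{xy}`) bijectively onto those of `X'`.
-/

section

variable {T : Type*} [Fintype T]

theorem timesInS_map_of_strictMono {φ : T → ℝ → ℝ} (hφ : ∀ t, StrictMono (φ t))
    (s : Sym2 (T → ℝ)) (x : T → ℝ) :
    timesInS (s.map fun u t => φ t (u t)) (fun t => φ t (x t)) = timesInS s x := by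
  induction s using Sym2.ind with
  | _ v w =>
    ext t
    simp only [timesInS, mem_filter, mem_univ, true_and]
    simp only [Sym2.map_mk, Sym2.lift_mk, ← (hφ t).monotone.map_min, ← (hφ t).monotone.map_max,
      (hφ t).le_iff_le]

theorem bands_image_of_injective {f : (T → ℝ) → T → ℝ} (hf : f.Injective)
    (X : Finset (T → ℝ)) :
    bands (X.image f) = (bands X).image (Sym2.map f) := by
  rw [bands, bands, sym2_image, filter_image]
  exact congrArg _ (filter_congr fun s _ => by simp [Sym2.isDiag_map hf])

variable {f : (T → ℝ) → T → ℝ} (hf : f.Injective)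
  (hfS : ∀ s x, timesInS (s.map f) (f x) = timesInS s x)
include hf hfS

theorem Bxy_image_of_injective (X : Finset (T → ℝ)) (x y : T → ℝ) :
    Bxy (X.image f) (f x) (f y) = (Bxy X x y).image (Sym2.map f) := by
  rw [Bxy, Bxy, bands_image_of_injective hf, filter_image]
  exact congrArg _ (filter_congr fun s _ => by simp [hfS])

theorem bandD_image_of_injective (X : Finset (T → ℝ)) (x y : T → ℝ) :
    bandD (X.image f) (f x) (f y) = bandD X x y := by
  have hmap : (Sym2.map f).Injective := Sym2.map.injective hf
  rw [bandD, bandD, Bxy_image_of_injective hf hfS, card_image_of_injective _ hmap,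
    sum_image fun _ _ _ _ h => hmap h]
  simp only [bandDistS, bandSimS, hfS]

end

theorem bandD_invariant_of_strictMono_general {T : Type*} [Fintype T]
    (X : Finset (T → ℝ))
    (φ : T → ℝ → ℝ) (hφ : ∀ t : T, StrictMono (φ t)) :
    (∀ x ∈ X, ∀ y ∈ X,
      bandD (X.image (fun u : T → ℝ => fun t => φ t (u t)))
          (fun t => φ t (x t)) (fun t => φ t (y t))
        = bandD X x y) ∧
    (∀ v ∈ X, ∀ w ∈ X, ∀ x ∈ X,
      timesInS s((fun t => φ t (v t)), (fun t => φ t (w t))) (fun t => φ t (x t))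
        = timesInS s(v, w) x) := by
  have hinj : (fun (u : T → ℝ) t => φ t (u t)).Injective :=
    fun u v h => funext fun t => (hφ t).injective (congrFun h t)
  refine ⟨fun x _ y _ => bandD_image_of_injective hinj (timesInS_map_of_strictMono hφ) X x y,
    fun v _ w _ x _ => ?_⟩
  simpa only [Sym2.map_mk] using timesInS_map_of_strictMono hφ s(v, w) x

/-- The band distance is invariant under time-wise order-preserving transformations: if
`φ t : ℝ → ℝ` is strictly increasing for each time `t`, and `X'` is the image of the
dataset `X` under `x ↦ (fun t => φ t (x t))`, then the band distance in `X'` between the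
transformed observations equals the band distance in `X` between the originals; and
moreover each transformed band contains a transformed observation at exactly the same
times as the original band contains the original observation. -/
theorem bandD_invariant_of_strictMono {T : Type*} [Fintype T] [Nonempty T]
    (X : Finset (T → ℝ)) (hX : 2 ≤ X.card)
    (φ : T → ℝ → ℝ) (hφ : ∀ t : T, StrictMono (φ t)) :
    (∀ x ∈ X, ∀ y ∈ X,
      bandD (X.image (fun u : T → ℝ => fun t => φ t (u t)))
          (fun t => φ t (x t)) (fun t => φ t (y t))
        = bandD X x y) ∧
    (∀ v ∈ X, ∀ w ∈ X, ∀ x ∈ X,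
      timesInS s((fun t => φ t (v t)), (fun t => φ t (w t))) (fun t => φ t (x t))
        = timesInS s(v, w) x) :=
  bandD_invariant_of_strictMono_general X φ hφ
end
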